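/- For $k \ge n_0 \ge 0$, the weighted number of two-row configurations of length $k$ with $n_0$ zero-columns and all weights equal to 1 (i.e., $\alpha = \beta = 1$, no star columns) equals the ballot number $C^{k+n_0+1}_{k-n_0}$. -/
import Mathlib

open scoped Classical

/-- Ballot numbers `C^n_k = C(n+k, n) - C(n+k, n+1)`. -/
def ballot (n k : ℕ) : ℕ := (n + k).choose n - (n + k).choose (n + 1)

/-- The value in `{-1, 0, 1}` encoded by an element of `Fin 3`. -/
def val3 (x : Fin 3) : ℤ := (x : ℤ) - 1

/-- The sum of the two entries of column `i` of a two-row configuration. -/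
def colSum {k : ℕ} (c : Fin k → Fin 3 × Fin 3) (i : Fin k) : ℤ :=
  val3 (c i).1 + val3 (c i).2

/-- The sum of all entries in the first `m` columns. -/
def preSum {k : ℕ} (c : Fin k → Fin 3 × Fin 3) (m : ℕ) : ℤ :=
  ∑ i : Fin k, if (i : ℕ) < m then colSum c i else 0

/-- A two-row configuration of length `k` with `n₀` zero-columns: each column
has two entries in `{-1,0,1}`, a `0` occurs in the top row iff it occurs in the
bottom row of the same column (and there are `n₀` such columns), to the left of
any column there are at least as many `1`'s as `-1`'s (positivity), and the
`1`'s and `-1`'s balance out: the total sum is `0` and the running sum vanishes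
at every zero-column (so that between any two `0`-columns the number of `1`'s
equals the number of `-1`'s). -/
def IsTwoRowConfig {k : ℕ} (n₀ : ℕ) (c : Fin k → Fin 3 × Fin 3) : Prop :=
  (∀ i : Fin k, (c i).1 = 1 ↔ (c i).2 = 1) ∧
  (Finset.univ.filter (fun i : Fin k => (c i).1 = 1)).card = n₀ ∧
  (∀ m : ℕ, 0 ≤ preSum c m) ∧
  preSum c k = 0 ∧
  (∀ i : Fin k, (c i).1 = 1 → preSum c (i : ℕ) = 0)

/-! ### Auxiliary numeric lemmas about ballot numbers -/

lemma choose_anti {m i : ℕ} (h : m ≤ 2 * i + 1) : m.choose (i + 1) ≤ m.choose i := by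
  rcases le_or_gt m i with hm | hm
  · rw [Nat.choose_eq_zero_of_lt (by omega)]
    exact Nat.zero_le _
  · rcases eq_or_lt_of_le h with he | hlt
    · exact le_of_eq (by rw [he]; exact Nat.choose_symm_half i)
    · have h2 : m ≤ 2 * i := by omega
      have hs : m.choose (i + 1) = m.choose (m - (i + 1)) := (Nat.choose_symm (by omega)).symm
      have hs2 : m.choose i = m.choose (m - i) := (Nat.choose_symm (by omega)).symm
      have he2 : m - i = (m - (i + 1)) + 1 := by omega
      rw [hs, hs2, he2]
      exact Nat.choose_le_succ_of_lt_half_left (by omega)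

lemma ballot_zero (n : ℕ) : ballot n 0 = 1 := by
  simp [ballot, Nat.choose_eq_zero_of_lt (Nat.lt_succ_self n)]

lemma ballot_pascal (a b : ℕ) (h : b ≤ a) :
    ballot (a + 1) (b + 1) = ballot a (b + 1) + ballot (a + 1) b := by
  simp only [ballot]
  have e : a + 1 + (b + 1) = (a + (b + 1)) + 1 := by omega
  have e' : a + 1 + b = a + (b + 1) := by omega
  rw [e, e']
  rw [Nat.choose_succ_succ' (a + (b + 1)) a, Nat.choose_succ_succ' (a + (b + 1)) (a + 1)]
  have l1 : (a + (b + 1)).choose (a + 1) ≤ (a + (b + 1)).choose a := choose_anti (by omega)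
  have l2 : (a + (b + 1)).choose (a + 1 + 1) ≤ (a + (b + 1)).choose (a + 1) := by
    have := choose_anti (m := a + (b + 1)) (i := a + 1) (by omega)
    simpa using this
  omega

lemma ballot_diag (a : ℕ) : ballot (a + 1) (a + 1) = ballot (a + 1) a := by
  simp only [ballot]
  have e : a + 1 + (a + 1) = (2 * a + 1) + 1 := by omega
  have e' : a + 1 + a = 2 * a + 1 := by omega
  rw [e, e']
  rw [Nat.choose_succ_succ' (2 * a + 1) a, Nat.choose_succ_succ' (2 * a + 1) (a + 1)]
  have hsym : (2 * a + 1).choose (a + 1) = (2 * a + 1).choose a := Nat.choose_symm_half a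
  have l2 : (2 * a + 1).choose (a + 1 + 1) ≤ (2 * a + 1).choose (a + 1) := by
    have := choose_anti (m := 2 * a + 1) (i := a + 1) (by omega)
    simpa using this
  omega

/-- The target closed form: `T k m = ballot (k+m+1) (k-m)` truncated to `m ≤ k`. -/
def T (k m : ℕ) : ℕ := if m ≤ k then ballot (k + m + 1) (k - m) else 0

lemma T_eval (k m : ℕ) (h : m ≤ k) : T k m = ballot (k + m + 1) (k - m) := if_pos h

lemma T_top {k m : ℕ} (h : k < m) : T k m = 0 := if_neg (by omega)

lemma step0 (k : ℕ) : T (k + 1) 0 = T k 1 + 2 * T k 0 := by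
  cases k with
  | zero =>
    have h1 : T 1 0 = ballot 2 1 := by rw [T_eval _ _ (by omega)]
    have h2 : T 0 1 = 0 := T_top (by omega)
    have h3 : T 0 0 = ballot 1 0 := by rw [T_eval _ _ (by omega)]
    rw [h1, h2, h3]
    decide
  | succ k' =>
    have h1 : T (k' + 1 + 1) 0 = ballot (k' + 3) (k' + 2) := by
      rw [T_eval _ _ (by omega)]; congr 1 <;> omega
    have h2 : T (k' + 1) 1 = ballot (k' + 3) k' := by
      rw [T_eval _ _ (by omega)]; congr 1 <;> omega
    have h3 : T (k' + 1) 0 = ballot (k' + 2) (k' + 1) := by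
      rw [T_eval _ _ (by omega)]; congr 1 <;> omega
    have P1 : ballot (k' + 3) (k' + 2) = ballot (k' + 2) (k' + 2) + ballot (k' + 3) (k' + 1) :=
      ballot_pascal (k' + 2) (k' + 1) (by omega)
    have D : ballot (k' + 2) (k' + 2) = ballot (k' + 2) (k' + 1) := ballot_diag (k' + 1)
    have P2 : ballot (k' + 3) (k' + 1) = ballot (k' + 2) (k' + 1) + ballot (k' + 3) k' :=
      ballot_pascal (k' + 2) k' (by omega)
    omega

lemma step1 (k n : ℕ) : T (k + 1) (n + 1) = T k n + T k (n + 2) + 2 * T k (n + 1) := by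
  rcases lt_or_ge k (n + 1) with h | h
  · rcases Nat.lt_or_ge k n with h' | h'
    · -- k < n : everything vanishes
      rw [T_top (by omega), T_top (by omega), T_top (by omega), T_top (by omega)]
    · -- k = n
      have hk : k = n := by omega
      subst hk
      have h1 : T (k + 1) (k + 1) = ballot (2 * k + 3) 0 := by
        rw [T_eval _ _ (by omega)]; congr 1 <;> omega
      have h2 : T k k = ballot (2 * k + 1) 0 := by
        rw [T_eval _ _ (by omega)]; congr 1 <;> omega
      have h3 : T k (k + 2) = 0 := T_top (by omega)
      have h4 : T k (k + 1) = 0 := T_top (by omega)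
      rw [h1, h2, h3, h4, ballot_zero, ballot_zero]
  · obtain ⟨d, rfl⟩ : ∃ d, k = n + 1 + d := ⟨k - (n + 1), by omega⟩
    cases d with
    | zero =>
      have h1 : T (n + 1 + 0 + 1) (n + 1) = ballot (2 * n + 4) 1 := by
        rw [T_eval _ _ (by omega)]; congr 1 <;> omega
      have h2 : T (n + 1 + 0) n = ballot (2 * n + 2) 1 := by
        rw [T_eval _ _ (by omega)]; congr 1 <;> omega
      have h3 : T (n + 1 + 0) (n + 2) = 0 := T_top (by omega)
      have h4 : T (n + 1 + 0) (n + 1) = ballot (2 * n + 3) 0 := by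
        rw [T_eval _ _ (by omega)]; congr 1 <;> omega
      have P1 : ballot (2 * n + 4) 1 = ballot (2 * n + 3) 1 + ballot (2 * n + 4) 0 :=
        ballot_pascal (2 * n + 3) 0 (by omega)
      have P2 : ballot (2 * n + 3) 1 = ballot (2 * n + 2) 1 + ballot (2 * n + 3) 0 :=
        ballot_pascal (2 * n + 2) 0 (by omega)
      have z1 : ballot (2 * n + 4) 0 = 1 := ballot_zero _
      have z2 : ballot (2 * n + 3) 0 = 1 := ballot_zero _
      omega
    | succ d' =>
      have h1 : T (n + 1 + (d' + 1) + 1) (n + 1) = ballot (2 * n + d' + 5) (d' + 2) := by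
        rw [T_eval _ _ (by omega)]; congr 1 <;> omega
      have h2 : T (n + 1 + (d' + 1)) n = ballot (2 * n + d' + 3) (d' + 2) := by
        rw [T_eval _ _ (by omega)]; congr 1 <;> omega
      have h3 : T (n + 1 + (d' + 1)) (n + 2) = ballot (2 * n + d' + 5) d' := by
        rw [T_eval _ _ (by omega)]; congr 1 <;> omega
      have h4 : T (n + 1 + (d' + 1)) (n + 1) = ballot (2 * n + d' + 4) (d' + 1) := by
        rw [T_eval _ _ (by omega)]; congr 1 <;> omega
      have P1 : ballot (2 * n + d' + 5) (d' + 2)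
          = ballot (2 * n + d' + 4) (d' + 2) + ballot (2 * n + d' + 5) (d' + 1) :=
        ballot_pascal (2 * n + d' + 4) (d' + 1) (by omega)
      have P2 : ballot (2 * n + d' + 4) (d' + 2)
          = ballot (2 * n + d' + 3) (d' + 2) + ballot (2 * n + d' + 4) (d' + 1) :=
        ballot_pascal (2 * n + d' + 3) (d' + 1) (by omega)
      have P3 : ballot (2 * n + d' + 5) (d' + 1)
          = ballot (2 * n + d' + 4) (d' + 1) + ballot (2 * n + d' + 5) d' :=
        ballot_pascal (2 * n + d' + 4) d' (by omega)
      omega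

/-! ### The generalized configuration predicate -/

/-- Configurations starting at height `2j`. -/
def Cfg {k : ℕ} (j n : ℕ) (c : Fin k → Fin 3 × Fin 3) : Prop :=
  (∀ i : Fin k, (c i).1 = 1 ↔ (c i).2 = 1) ∧
  (Finset.univ.filter (fun i : Fin k => (c i).1 = 1)).card = n ∧
  (∀ m : ℕ, 0 ≤ 2 * (j : ℤ) + preSum c m) ∧
  (2 * (j : ℤ) + preSum c k = 0) ∧
  (∀ i : Fin k, (c i).1 = 1 → 2 * (j : ℤ) + preSum c (i : ℕ) = 0)

noncomputable def Nc (k n j : ℕ) : ℕ :=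
  (Finset.univ.filter (fun c : Fin k → Fin 3 × Fin 3 => Cfg j n c)).card

lemma preSum_zero {k : ℕ} (c : Fin k → Fin 3 × Fin 3) : preSum c 0 = 0 := by
  simp [preSum]

lemma preSum_cons_succ {k : ℕ} (x : Fin 3 × Fin 3) (c : Fin k → Fin 3 × Fin 3) (m : ℕ) :
    preSum (Fin.cons x c) (m + 1) = (val3 x.1 + val3 x.2) + preSum c m := by
  unfold preSum
  rw [Fin.sum_univ_succ]
  have h1 : ∀ i : Fin k,
      (if ((i.succ : Fin (k + 1)) : ℕ) < m + 1 then colSum (Fin.cons x c) i.succ else 0)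
        = (if (i : ℕ) < m then colSum c i else 0) := by
    intro i
    simp [colSum, Fin.cons_succ, Fin.val_succ, Nat.succ_lt_succ_iff]
  rw [Finset.sum_congr rfl (fun i _ => h1 i)]
  simp [colSum]

lemma count_cons {k : ℕ} (x : Fin 3 × Fin 3) (c : Fin k → Fin 3 × Fin 3) :
    (Finset.univ.filter fun i : Fin (k + 1) => ((Fin.cons x c : Fin (k+1) → Fin 3 × Fin 3) i).1 = 1).card
      = (if x.1 = 1 then 1 else 0)
        + (Finset.univ.filter fun i : Fin k => (c i).1 = 1).card := by
  rw [Finset.card_filter, Finset.card_filter, Fin.sum_univ_succ]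
  simp [Fin.cons_zero, Fin.cons_succ]

lemma cfg_cons_iff {k : ℕ} (j n : ℕ) (x : Fin 3 × Fin 3) (c : Fin k → Fin 3 × Fin 3) :
    Cfg j n (Fin.cons x c) ↔
      (x.1 = 1 ↔ x.2 = 1) ∧
      (∀ i : Fin k, (c i).1 = 1 ↔ (c i).2 = 1) ∧
      ((if x.1 = 1 then 1 else 0)
        + (Finset.univ.filter (fun i : Fin k => (c i).1 = 1)).card = n) ∧
      (∀ m : ℕ, 0 ≤ (2 * (j : ℤ) + (val3 x.1 + val3 x.2)) + preSum c m) ∧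
      ((2 * (j : ℤ) + (val3 x.1 + val3 x.2)) + preSum c k = 0) ∧
      (x.1 = 1 → (j : ℤ) = 0) ∧
      (∀ i : Fin k, (c i).1 = 1 →
        (2 * (j : ℤ) + (val3 x.1 + val3 x.2)) + preSum c (i : ℕ) = 0) := by
  constructor
  · rintro ⟨h1, h2, h3, h4, h5⟩
    refine ⟨by simpa using h1 0, fun i => by simpa [Fin.cons_succ] using h1 i.succ, ?_, ?_, ?_, ?_, ?_⟩
    · rw [← h2, count_cons]
    · intro m
      have := h3 (m + 1)
      rw [preSum_cons_succ] at this
      linarith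
    · have := h4
      rw [preSum_cons_succ] at this
      linarith
    · intro hx
      have h0 := h5 0 (by simpa using hx)
      rw [Fin.val_zero, preSum_zero, add_zero] at h0
      linarith
    · intro i hi
      have := h5 i.succ (by simpa [Fin.cons_succ] using hi)
      rw [Fin.val_succ, preSum_cons_succ] at this
      linarith
  · rintro ⟨g1, g2, g3, g4, g5, g6, g7⟩
    refine ⟨?_, ?_, ?_, ?_, ?_⟩
    · intro i
      refine Fin.cases ?_ ?_ i
      · simpa using g1
      · intro i'; simpa [Fin.cons_succ] using g2 i'
    · rw [count_cons, g3]
    · intro m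
      cases m with
      | zero =>
        rw [preSum_zero, add_zero]
        positivity
      | succ m =>
        rw [preSum_cons_succ]
        have := g4 m
        linarith
    · show 2 * (j : ℤ) + preSum (Fin.cons x c) (k + 1) = 0
      rw [preSum_cons_succ]
      linarith
    · intro i
      refine Fin.cases ?_ ?_ i
      · intro hx
        have := g6 (by simpa using hx)
        rw [Fin.val_zero, preSum_zero, add_zero]
        linarith
      · intro i' hi'
        rw [Fin.val_succ, preSum_cons_succ]
        have := g7 i' (by simpa [Fin.cons_succ] using hi')
        linarith

lemma card_eq_Nc {k : ℕ} {p : (Fin k → Fin 3 × Fin 3) → Prop} (j n : ℕ)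
    (h : ∀ c, p c ↔ Cfg j n c) :
    (Finset.univ.filter p).card = Nc k n j := by
  unfold Nc
  rw [Finset.filter_congr (fun c _ => h c)]

/-- Nonzero columns shift the height. -/
lemma cfg_cons_nonzero {k : ℕ} (x : Fin 3 × Fin 3) (hx1 : x.1 ≠ 1) (hx2 : x.2 ≠ 1)
    (j j' n : ℕ) (hs : 2 * (j : ℤ) + (val3 x.1 + val3 x.2) = 2 * (j' : ℤ))
    (c : Fin k → Fin 3 × Fin 3) :
    Cfg j n (Fin.cons x c) ↔ Cfg j' n c := by
  rw [cfg_cons_iff]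
  constructor
  · rintro ⟨-, a, b, c1, c2, -, c3⟩
    refine ⟨a, by simpa [if_neg hx1] using b, ?_, ?_, ?_⟩
    · intro m; have := c1 m; rwa [hs] at this
    · have := c2; rwa [hs] at this
    · intro i hi; have := c3 i hi; rwa [hs] at this
  · rintro ⟨a, b, c1, c2, c3⟩
    refine ⟨iff_of_false hx1 hx2, a, by simpa [if_neg hx1] using b, ?_, ?_, fun hh => absurd hh hx1, ?_⟩
    · intro m; rw [hs]; exact c1 m
    · rw [hs]; exact c2
    · intro i hi; rw [hs]; exact c3 i hi

/-! ### Evaluation of the nine first-column cases -/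

lemma term_mixed {k : ℕ} (j n : ℕ) (x : Fin 3 × Fin 3) (hx : ¬(x.1 = 1 ↔ x.2 = 1)) :
    (Finset.univ.filter fun c : Fin k → Fin 3 × Fin 3 => Cfg j n (Fin.cons x c)).card = 0 := by
  rw [Finset.card_eq_zero, Finset.filter_eq_empty_iff]
  intro c _ hc
  exact hx ((cfg_cons_iff j n x c).mp hc).1

lemma term20 {k : ℕ} (j n : ℕ) :
    (Finset.univ.filter fun c : Fin k → Fin 3 × Fin 3 =>
      Cfg j n (Fin.cons ((2 : Fin 3), (0 : Fin 3)) c)).card = Nc k n j :=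
  card_eq_Nc j n (fun c => cfg_cons_nonzero _ (by decide) (by decide) j j n
    (by have : val3 (2 : Fin 3) + val3 (0 : Fin 3) = 0 := by decide
        rw [this]; ring) c)

lemma term02 {k : ℕ} (j n : ℕ) :
    (Finset.univ.filter fun c : Fin k → Fin 3 × Fin 3 =>
      Cfg j n (Fin.cons ((0 : Fin 3), (2 : Fin 3)) c)).card = Nc k n j :=
  card_eq_Nc j n (fun c => cfg_cons_nonzero _ (by decide) (by decide) j j n
    (by have : val3 (0 : Fin 3) + val3 (2 : Fin 3) = 0 := by decide
        rw [this]; ring) c)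

lemma term22 {k : ℕ} (j n : ℕ) :
    (Finset.univ.filter fun c : Fin k → Fin 3 × Fin 3 =>
      Cfg j n (Fin.cons ((2 : Fin 3), (2 : Fin 3)) c)).card = Nc k n (j + 1) :=
  card_eq_Nc (j + 1) n (fun c => cfg_cons_nonzero _ (by decide) (by decide) j (j + 1) n
    (by have : val3 (2 : Fin 3) + val3 (2 : Fin 3) = 2 := by decide
        rw [this]; push_cast; ring) c)

lemma term00 {k : ℕ} (j n : ℕ) :
    (Finset.univ.filter fun c : Fin k → Fin 3 × Fin 3 =>
      Cfg (j + 1) n (Fin.cons ((0 : Fin 3), (0 : Fin 3)) c)).card = Nc k n j :=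
  card_eq_Nc j n (fun c => cfg_cons_nonzero _ (by decide) (by decide) (j + 1) j n
    (by have : val3 (0 : Fin 3) + val3 (0 : Fin 3) = -2 := by decide
        rw [this]; push_cast; ring) c)

lemma term00' {k : ℕ} (n : ℕ) :
    (Finset.univ.filter fun c : Fin k → Fin 3 × Fin 3 =>
      Cfg 0 n (Fin.cons ((0 : Fin 3), (0 : Fin 3)) c)).card = 0 := by
  rw [Finset.card_eq_zero, Finset.filter_eq_empty_iff]
  intro c _ hc
  have h := ((cfg_cons_iff 0 n _ c).mp hc).2.2.2.1 0
  rw [preSum_zero] at h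
  have hv : val3 (0 : Fin 3) + val3 (0 : Fin 3) = -2 := by decide
  rw [hv] at h
  norm_num at h

lemma term11_succ {k : ℕ} (n : ℕ) :
    (Finset.univ.filter fun c : Fin k → Fin 3 × Fin 3 =>
      Cfg 0 (n + 1) (Fin.cons ((1 : Fin 3), (1 : Fin 3)) c)).card = Nc k n 0 := by
  apply card_eq_Nc
  intro c
  rw [cfg_cons_iff]
  have hv : val3 (1 : Fin 3) + val3 (1 : Fin 3) = 0 := by decide
  unfold Cfg
  constructor
  · rintro ⟨-, a, b, c1, c2, -, c3⟩
    refine ⟨a, ?_, ?_, ?_, ?_⟩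
    · simp at b; omega
    · intro m; have := c1 m; rw [hv] at this; linarith
    · have := c2; rw [hv] at this; linarith
    · intro i hi; have := c3 i hi; rw [hv] at this; linarith
  · rintro ⟨a, b, c1, c2, c3⟩
    refine ⟨Iff.rfl, a, by simp; omega, ?_, ?_, fun _ => by norm_num, ?_⟩
    · intro m; rw [hv]; have := c1 m; linarith
    · rw [hv]; have := c2; linarith
    · intro i hi; rw [hv]; have := c3 i hi; linarith

lemma term11_zero {k : ℕ} :
    (Finset.univ.filter fun c : Fin k → Fin 3 × Fin 3 =>
      Cfg 0 0 (Fin.cons ((1 : Fin 3), (1 : Fin 3)) c)).card = 0 := by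
  rw [Finset.card_eq_zero, Finset.filter_eq_empty_iff]
  intro c _ hc
  have h := ((cfg_cons_iff 0 0 _ c).mp hc).2.2.1
  simp at h

lemma term11_pos {k : ℕ} (j n : ℕ) :
    (Finset.univ.filter fun c : Fin k → Fin 3 × Fin 3 =>
      Cfg (j + 1) n (Fin.cons ((1 : Fin 3), (1 : Fin 3)) c)).card = 0 := by
  rw [Finset.card_eq_zero, Finset.filter_eq_empty_iff]
  intro c _ hc
  have h := ((cfg_cons_iff (j + 1) n _ c).mp hc).2.2.2.2.2.1 rfl
  have : ((j : ℤ) + 1) ≠ 0 := by positivity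
  exact this (by push_cast at h ⊢; linarith)

/-! ### The cardinality recurrence -/

lemma Nc_succ (k n j : ℕ) :
    Nc (k + 1) n j = ∑ x : Fin 3 × Fin 3,
      (Finset.univ.filter fun c : Fin k → Fin 3 × Fin 3 =>
        Cfg j n (Fin.cons x c)).card := by
  classical
  have e : {c : Fin (k + 1) → Fin 3 × Fin 3 // Cfg j n c} ≃
      (x : Fin 3 × Fin 3) × {c : Fin k → Fin 3 × Fin 3 // Cfg j n (Fin.cons x c)} := by
    refine Equiv.trans ?_
      (Equiv.subtypeProdEquivSigmaSubtype
        (fun (x : Fin 3 × Fin 3) (c : Fin k → Fin 3 × Fin 3) => Cfg j n (Fin.cons x c)))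
    exact
      { toFun := fun c => ⟨(c.1 0, Fin.tail c.1), by
          simpa [Fin.cons_self_tail] using c.2⟩
        invFun := fun p => ⟨Fin.cons p.1.1 p.1.2, p.2⟩
        left_inv := fun c => Subtype.ext (Fin.cons_self_tail c.1)
        right_inv := fun p => Subtype.ext (by simp) }
  have h1 : Nc (k + 1) n j
      = Fintype.card {c : Fin (k + 1) → Fin 3 × Fin 3 // Cfg j n c} :=
    (Fintype.card_subtype _).symm
  rw [h1, Fintype.card_congr e, Fintype.card_sigma]
  exact Finset.sum_congr rfl (fun x _ => Fintype.card_subtype _)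

lemma R0 (k : ℕ) : Nc (k + 1) 0 0 = Nc k 0 1 + 2 * Nc k 0 0 := by
  rw [Nc_succ, Fintype.sum_prod_type]
  simp only [Fin.sum_univ_three]
  rw [term00' (k := k) 0, term02 (k := k) 0 0, term20 (k := k) 0 0, term22 (k := k) 0 0,
    term11_zero (k := k),
    term_mixed (k := k) 0 0 ((0 : Fin 3), (1 : Fin 3)) (by decide),
    term_mixed (k := k) 0 0 ((1 : Fin 3), (0 : Fin 3)) (by decide),
    term_mixed (k := k) 0 0 ((1 : Fin 3), (2 : Fin 3)) (by decide),
    term_mixed (k := k) 0 0 ((2 : Fin 3), (1 : Fin 3)) (by decide)]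
  ring

lemma R1 (k n : ℕ) :
    Nc (k + 1) (n + 1) 0 = Nc k n 0 + Nc k (n + 1) 1 + 2 * Nc k (n + 1) 0 := by
  rw [Nc_succ, Fintype.sum_prod_type]
  simp only [Fin.sum_univ_three]
  rw [term00' (k := k) (n + 1), term02 (k := k) 0 (n + 1), term20 (k := k) 0 (n + 1),
    term22 (k := k) 0 (n + 1), term11_succ (k := k) n,
    term_mixed (k := k) 0 (n + 1) ((0 : Fin 3), (1 : Fin 3)) (by decide),
    term_mixed (k := k) 0 (n + 1) ((1 : Fin 3), (0 : Fin 3)) (by decide),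
    term_mixed (k := k) 0 (n + 1) ((1 : Fin 3), (2 : Fin 3)) (by decide),
    term_mixed (k := k) 0 (n + 1) ((2 : Fin 3), (1 : Fin 3)) (by decide)]
  ring

lemma R2 (k n j : ℕ) :
    Nc (k + 1) n (j + 1) = Nc k n j + Nc k n (j + 2) + 2 * Nc k n (j + 1) := by
  rw [Nc_succ, Fintype.sum_prod_type]
  simp only [Fin.sum_univ_three]
  rw [term00 (k := k) j n, term02 (k := k) (j + 1) n, term20 (k := k) (j + 1) n,
    term22 (k := k) (j + 1) n, term11_pos (k := k) j n,
    term_mixed (k := k) (j + 1) n ((0 : Fin 3), (1 : Fin 3)) (by decide),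
    term_mixed (k := k) (j + 1) n ((1 : Fin 3), (0 : Fin 3)) (by decide),
    term_mixed (k := k) (j + 1) n ((1 : Fin 3), (2 : Fin 3)) (by decide),
    term_mixed (k := k) (j + 1) n ((2 : Fin 3), (1 : Fin 3)) (by decide)]
  ring

lemma Nc_zero (n j : ℕ) : Nc 0 n j = if n = 0 ∧ j = 0 then 1 else 0 := by
  unfold Nc
  split_ifs with h
  · obtain ⟨rfl, rfl⟩ := h
    rw [Finset.filter_true_of_mem, Finset.card_univ]
    · simp
    · intro c _
      refine ⟨fun i => i.elim0, by simp, fun m => by simp [preSum], by simp [preSum],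
        fun i => i.elim0⟩
  · rw [Finset.card_eq_zero, Finset.filter_eq_empty_iff]
    intro c _ hc
    obtain ⟨-, h2, -, h4, -⟩ := hc
    apply h
    have hps : preSum c 0 = 0 := by simp [preSum]
    rw [hps, add_zero] at h4
    constructor
    · simpa using h2.symm
    · have : (j : ℤ) = 0 := by linarith
      exact_mod_cast this

lemma Nc_eq (k : ℕ) : ∀ n j, Nc k n j = T k (n + j) := by
  induction k with
  | zero =>
    intro n j
    rw [Nc_zero]
    by_cases h : n = 0 ∧ j = 0
    · obtain ⟨rfl, rfl⟩ := h
      rw [if_pos ⟨rfl, rfl⟩, T_eval 0 0 (le_refl 0), ballot_zero]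
    · rw [if_neg h, T.eq_def, if_neg (by omega)]
  | succ k ih =>
    intro n j
    match j, n with
    | 0, 0 =>
      have h1 : Nc k 0 1 = T k 1 := ih 0 1
      have h2 : Nc k 0 0 = T k 0 := ih 0 0
      rw [R0, h1, h2]
      exact (step0 k).symm
    | 0, n + 1 =>
      have h1 : Nc k n 0 = T k n := ih n 0
      have h2 : Nc k (n + 1) 1 = T k (n + 2) := ih (n + 1) 1
      have h3 : Nc k (n + 1) 0 = T k (n + 1) := ih (n + 1) 0
      rw [R1, h1, h2, h3]
      exact (step1 k n).symm
    | j + 1, n =>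
      have h1 : Nc k n j = T k (n + j) := ih n j
      have h2 : Nc k n (j + 2) = T k (n + j + 2) := ih n (j + 2)
      have h3 : Nc k n (j + 1) = T k (n + j + 1) := ih n (j + 1)
      rw [R2, h1, h2, h3]
      exact (step1 k (n + j)).symm

/-- For `k ≥ n₀ ≥ 0`, the number of two-row configurations of length `k` with
`n₀` zero-columns (all weights `1`, i.e. `α = β = 1`, no star columns) is the
ballot number `C^{k+n₀+1}_{k-n₀}`. -/
theorem twoRowConfig_card (k n₀ : ℕ) (h : n₀ ≤ k) :
    (Finset.univ.filter
        (fun c : Fin k → Fin 3 × Fin 3 => IsTwoRowConfig n₀ c)).card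
      = ballot (k + n₀ + 1) (k - n₀) := by
  have e : (Finset.univ.filter
      (fun c : Fin k → Fin 3 × Fin 3 => IsTwoRowConfig n₀ c)).card = Nc k n₀ 0 :=
    card_eq_Nc 0 n₀ (fun c => by simp [IsTwoRowConfig, Cfg])
  rw [e, Nc_eq k n₀ 0, T_eval k (n₀ + 0) (by omega)]
  congr 1 <;> omega
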